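/- arXiv:1502.07084 — 7 statements merged into one kernel-verified Lean document; each statement's English description precedes it below -/
import Mathlib

section
/- Let X and Y be real Banach spaces with Y strictly convex. Suppose that for every x₀ ∈ X with ‖x₀‖ = 1, the closed linear span of the set { z ∈ X : ‖x₀ + z‖ ≤ 1 and ‖x₀ − z‖ ≤ 1 } is a finite-codimensional subspace of X. Then every norm attaining bounded linear operator T : X → Y has finite rank (i.e., its range is a finite-dimensional subspace of Y). -/
/-- A bounded linear operator attains its norm if there is a norm-one vector where
the operator norm is achieved. -/
def NormAttaining {X Y : Type*} [NormedAddCommGroup X] [NormedSpace ℝ X]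
    [NormedAddCommGroup Y] [NormedSpace ℝ Y] (T : X →L[ℝ] Y) : Prop :=
  ∃ x : X, ‖x‖ = 1 ∧ ‖T x‖ = ‖T‖

/-!
If `T` attains its norm at `x₀` and `‖x₀ ± z‖ ≤ 1`, then `T x₀ ± T z` both lie in the ball of
radius `‖T x₀‖` and average to `T x₀`; since `Y` is strictly convex, `T x₀` is an extreme point
of that ball, so `T z = 0`. Hence `T` vanishes on the closed span of all such `z`, and `T` factors
through the finite-dimensional quotient of `X` by it.
-/

theorem eq_zero_of_norm_add_le_of_norm_sub_le {E : Type*} [NormedAddCommGroup E]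
    [NormedSpace ℝ E] [StrictConvexSpace ℝ E] {u v : E}
    (hadd : ‖u + v‖ ≤ ‖u‖) (hsub : ‖u - v‖ ≤ ‖u‖) : v = 0 := by
  have hsum : (u + v) + (u - v) = (2 : ℝ) • u := by rw [two_smul]; abel
  have htwo : ‖(u + v) + (u - v)‖ = 2 * ‖u‖ := by
    rw [hsum, norm_smul, Real.norm_two]
  have htri := norm_add_le (u + v) (u - v)
  have hadd' : ‖u + v‖ = ‖u‖ := by linarith
  have hsub' : ‖u - v‖ = ‖u‖ := by linarith
  have heq : u + v = u - v :=
    eq_of_norm_eq_of_norm_add_eq (hadd'.trans hsub'.symm) (by rw [htwo, hadd', hsub']; ring)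
  rw [sub_eq_add_neg, add_right_inj] at heq
  have h2v : (2 : ℝ) • v = 0 := by
    rw [two_smul]
    nth_rewrite 2 [heq]
    exact add_neg_cancel v
  exact (smul_eq_zero.1 h2v).resolve_left two_ne_zero

theorem Submodule.finite_range_of_le_ker {R M N : Type*} [Ring R] [AddCommGroup M] [Module R M]
    [AddCommGroup N] [Module R N] {p : Submodule R M} [Module.Finite R (M ⧸ p)]
    (f : M →ₗ[R] N) (hf : p ≤ LinearMap.ker f) : Module.Finite R (LinearMap.range f) := by
  rw [← p.range_liftQ f hf]
  infer_instance

namespace ContinuousLinearMap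

variable {X Y : Type*} [NormedAddCommGroup X] [NormedSpace ℝ X]
  [NormedAddCommGroup Y] [NormedSpace ℝ Y] [StrictConvexSpace ℝ Y]

theorem apply_eq_zero_of_norm_attained {T : X →L[ℝ] Y} {x₀ z : X} (hTx₀ : ‖T x₀‖ = ‖T‖)
    (hadd : ‖x₀ + z‖ ≤ 1) (hsub : ‖x₀ - z‖ ≤ 1) : T z = 0 := by
  have hle {w : X} (hw : ‖w‖ ≤ 1) : ‖T w‖ ≤ ‖T x₀‖ :=
    hTx₀ ▸ by simpa using T.le_of_opNorm_le_of_le le_rfl hw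
  refine eq_zero_of_norm_add_le_of_norm_sub_le (u := T x₀) ?_ ?_
  · simpa only [map_add] using hle hadd
  · simpa only [map_sub] using hle hsub

theorem topologicalClosure_span_le_ker_of_norm_attained {T : X →L[ℝ] Y} {x₀ : X}
    (hTx₀ : ‖T x₀‖ = ‖T‖) :
    (Submodule.span ℝ {z : X | ‖x₀ + z‖ ≤ 1 ∧ ‖x₀ - z‖ ≤ 1}).topologicalClosure ≤
      LinearMap.ker (T : X →ₗ[ℝ] Y) :=
  Submodule.topologicalClosure_minimal _
    (Submodule.span_le.2 fun _ hz => apply_eq_zero_of_norm_attained hTx₀ hz.1 hz.2)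
    T.isClosed_ker

end ContinuousLinearMap

theorem stmt_0_general (X Y : Type*) [NormedAddCommGroup X] [NormedSpace ℝ X]
    [NormedAddCommGroup Y] [NormedSpace ℝ Y] [StrictConvexSpace ℝ Y]
    (hX : ∀ x₀ : X, ‖x₀‖ = 1 →
      FiniteDimensional ℝ
        (X ⧸ (Submodule.span ℝ {z : X | ‖x₀ + z‖ ≤ 1 ∧ ‖x₀ - z‖ ≤ 1}).topologicalClosure))
    (T : X →L[ℝ] Y) (hT : NormAttaining T) :
    FiniteDimensional ℝ (LinearMap.range (T : X →ₗ[ℝ] Y)) := by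
  obtain ⟨x₀, hx₀, hTx₀⟩ := hT
  have := hX x₀ hx₀
  exact Submodule.finite_range_of_le_ker _
    (ContinuousLinearMap.topologicalClosure_span_le_ker_of_norm_attained hTx₀)

theorem stmt_0 (X Y : Type*) [NormedAddCommGroup X] [NormedSpace ℝ X] [CompleteSpace X]
    [NormedAddCommGroup Y] [NormedSpace ℝ Y] [CompleteSpace Y] [StrictConvexSpace ℝ Y]
    (hX : ∀ x₀ : X, ‖x₀‖ = 1 →
      FiniteDimensional ℝ
        (X ⧸ (Submodule.span ℝ {z : X | ‖x₀ + z‖ ≤ 1 ∧ ‖x₀ - z‖ ≤ 1}).topologicalClosure))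
    (T : X →L[ℝ] Y) (hT : NormAttaining T) :
    FiniteDimensional ℝ (LinearMap.range (T : X →ₗ[ℝ] Y)) :=
  stmt_0_general X Y hX T hT
end

section
/- Let X be a closed subspace of c₀. Then for every x₀ ∈ X with ‖x₀‖ = 1, the closed linear span of the set { z ∈ X : ‖x₀ + z‖ ≤ 1 and ‖x₀ − z‖ ≤ 1 } is a finite-codimensional subspace of X. -/
/-!
Let `F` be the finite set of coordinates where `|J x₀|` exceeds `1/2`. If `z` vanishes on `F` and
`‖z‖ < 1/2`, then `‖x₀ ± z‖ ≤ 1` coordinatewise, so the span of the set contains every such `z`,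
hence the kernel of the restriction to `F`, a subspace of codimension at most `|F|`.
-/

open scoped ZeroAtInfty

namespace ZeroAtInftyContinuousMap

variable {α E : Type*} [TopologicalSpace α] [SeminormedAddCommGroup E]

theorem norm_apply_le (f : C₀(α, E)) (x : α) : ‖f x‖ ≤ ‖f‖ :=
  norm_toBCF_eq_norm (f := f) ▸ f.toBCF.norm_coe_le_norm x

theorem norm_le_iff {f : C₀(α, E)} {C : ℝ} (hC : 0 ≤ C) : ‖f‖ ≤ C ↔ ∀ x, ‖f x‖ ≤ C := by
  rw [← norm_toBCF_eq_norm]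
  exact BoundedContinuousFunction.norm_le hC

theorem finite_setOf_lt_norm [DiscreteTopology α] (f : C₀(α, E)) {ε : ℝ} (hε : 0 < ε) :
    {x | ε < ‖f x‖}.Finite := by
  have hf : Filter.Tendsto f Filter.cofinite (nhds 0) :=
    Filter.cocompact_eq_cofinite α ▸ zero_at_infty f
  simpa only [Metric.mem_closedBall, dist_zero_right, not_le] using
    Filter.eventually_cofinite.mp (hf.eventually (Metric.closedBall_mem_nhds 0 hε))

theorem norm_add_le_one {f g : C₀(α, E)} (hf : ‖f‖ ≤ 1) (hg : ‖g‖ ≤ 1 / 2)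
    (hfg : ∀ x, 1 / 2 < ‖f x‖ → g x = 0) : ‖f + g‖ ≤ 1 := by
  refine (norm_le_iff zero_le_one).mpr fun x => ?_
  by_cases hx : 1 / 2 < ‖f x‖
  · simpa [hfg x hx] using (f.norm_apply_le x).trans hf
  · calc ‖f x + g x‖ ≤ ‖f x‖ + ‖g x‖ := norm_add_le _ _
      _ ≤ 1 / 2 + 1 / 2 := add_le_add (not_lt.mp hx) ((g.norm_apply_le x).trans hg)
      _ = 1 := by norm_num

end ZeroAtInftyContinuousMap

theorem Submodule.le_span_of_forall_norm_lt {𝕜 E : Type*} [NontriviallyNormedField 𝕜]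
    [NormedAddCommGroup E] [NormedSpace 𝕜 E] (K : Submodule 𝕜 E) {s : Set E} {r : ℝ}
    (hr : 0 < r) (hs : ∀ z ∈ K, ‖z‖ < r → z ∈ s) : K ≤ span 𝕜 s := by
  intro z hz
  rcases eq_or_ne z 0 with rfl | hz0
  · exact zero_mem _
  obtain ⟨c, hc⟩ := NormedField.exists_one_lt_norm 𝕜
  obtain ⟨d, hd0, hdz, -⟩ := rescale_to_shell hc hr hz0
  simpa [smul_smul, inv_mul_cancel₀ hd0] using
    (span 𝕜 s).smul_mem d⁻¹ (subset_span (hs _ (K.smul_mem d hz) hdz))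

theorem stmt_1_general (X : Type*) [NormedAddCommGroup X] [NormedSpace ℝ X]
    (J : X →ₗᵢ[ℝ] C₀(ℕ, ℝ))
    (x₀ : X) (hx₀ : ‖x₀‖ = 1) :
    FiniteDimensional ℝ
      (X ⧸ (Submodule.span ℝ {z : X | ‖x₀ + z‖ ≤ 1 ∧ ‖x₀ - z‖ ≤ 1}).topologicalClosure) := by
  set F := {n | 1 / 2 < ‖J x₀ n‖}
  have : Finite F := ((J x₀).finite_setOf_lt_norm (by norm_num : (0 : ℝ) < 1 / 2)).to_subtype
  let φ : X →ₗ[ℝ] F → ℝ := LinearMap.pi fun n => ⟨⟨fun z => J z n, by simp⟩, by simp⟩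
  have hsmall : ∀ w ∈ LinearMap.ker φ, ‖w‖ < 1 / 2 → ‖x₀ + w‖ ≤ 1 := fun w hw hw_lt => by
    rw [← J.norm_map, map_add]
    refine ZeroAtInftyContinuousMap.norm_add_le_one (by rw [J.norm_map, hx₀])
      (by rw [J.norm_map]; exact hw_lt.le) fun n hn => congrFun (LinearMap.mem_ker.mp hw) ⟨n, hn⟩
  have hker : LinearMap.ker φ ≤ Submodule.span ℝ {z : X | ‖x₀ + z‖ ≤ 1 ∧ ‖x₀ - z‖ ≤ 1} :=
    (LinearMap.ker φ).le_span_of_forall_norm_lt (by norm_num) fun z hz hz_lt =>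
      ⟨hsmall z hz hz_lt, by
        simpa [sub_eq_add_neg] using hsmall (-z) (neg_mem hz) (by rwa [norm_neg])⟩
  exact (Submodule.CoFG.ker φ).of_le (hker.trans (Submodule.le_topologicalClosure _))

/-- Let `X` be a closed subspace of `c₀`, the Banach space of real sequences converging to zero
with the supremum norm (realized in Mathlib as `C₀(ℕ, ℝ)`, zero-at-infinity continuous maps on
the discrete space `ℕ`).  We encode this by a linear isometric embedding `J : X → c₀` with closed
range.  Then for every `x₀ ∈ X` with `‖x₀‖ = 1`, the closed linear span of the set
`{ z ∈ X : ‖x₀ + z‖ ≤ 1 ∧ ‖x₀ - z‖ ≤ 1 }` is a finite-codimensional subspace of `X`,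
i.e. the quotient of `X` by it is finite-dimensional. -/
theorem stmt_1 (X : Type*) [NormedAddCommGroup X] [NormedSpace ℝ X] [CompleteSpace X]
    (J : X →ₗᵢ[ℝ] C₀(ℕ, ℝ)) (hJ : IsClosed (Set.range J))
    (x₀ : X) (hx₀ : ‖x₀‖ = 1) :
    FiniteDimensional ℝ
      (X ⧸ (Submodule.span ℝ {z : X | ‖x₀ + z‖ ≤ 1 ∧ ‖x₀ - z‖ ≤ 1}).topologicalClosure) :=
  stmt_1_general X J x₀ hx₀
end

section
/- Let X be a closed subspace of c₀ and let Y be a strictly convex real Banach space. Then every norm attaining bounded linear operator T : X → Y has finite rank (i.e., its range is a finite-dimensional subspace of Y). -/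
open scoped ZeroAtInfty

/-!
Let `T` attain its norm at `x`, and let `F` be the finite set of coordinates where `|(J x) n|`
is at least half of `‖J x‖`. If `w` vanishes on `F` and is small enough, then `x + w` and `x - w`
stay in the ball of radius `‖x‖`, so `T (x ± w)` lie in the ball of radius `‖T x‖` while their sum
is `2 T x`. Strict convexity of `Y` forces `T (x + w) = T (x - w)`, that is `T w = 0`. Hence `T`
vanishes on the common kernel of the finitely many coordinate functionals indexed by `F`, so it
factors through a finite-dimensional space.
-/

theorem LinearMap.finiteDimensional_range_of_ker_le {K V U W : Type*} [DivisionRing K]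
    [AddCommGroup V] [Module K V] [AddCommGroup U] [Module K U] [AddCommGroup W] [Module K W]
    [FiniteDimensional K U] (φ : V →ₗ[K] U) (T : V →ₗ[K] W) (h : ker φ ≤ ker T) :
    FiniteDimensional K (range T) := by
  have : FiniteDimensional K (V ⧸ ker φ) := φ.quotKerEquivRange.symm.finiteDimensional
  rw [← Submodule.range_liftQ _ T h]
  infer_instance

theorem StrictConvexSpace.eq_of_norm_le_of_norm_add_eq {E : Type*} [NormedAddCommGroup E]
    [NormedSpace ℝ E] [StrictConvexSpace ℝ E] {a b : E} {r : ℝ} (ha : ‖a‖ ≤ r) (hb : ‖b‖ ≤ r)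
    (hab : ‖a + b‖ = 2 * r) : a = b := by
  have htri := norm_add_le a b
  exact eq_of_norm_eq_of_norm_add_eq (by linarith) (by linarith)

theorem ContinuousLinearMap.apply_eq_zero_of_norm_add_le_of_norm_sub_le {E F : Type*}
    [SeminormedAddCommGroup E] [NormedSpace ℝ E] [NormedAddCommGroup F] [NormedSpace ℝ F]
    [StrictConvexSpace ℝ F] (T : E →L[ℝ] F) {x w : E} (hx : ‖T x‖ = ‖T‖ * ‖x‖)
    (hadd : ‖x + w‖ ≤ ‖x‖) (hsub : ‖x - w‖ ≤ ‖x‖) : T w = 0 := by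
  have hbound : ∀ v, ‖v‖ ≤ ‖x‖ → ‖T v‖ ≤ ‖T x‖ := fun v hv =>
    hx ▸ (T.le_opNorm v).trans (mul_le_mul_of_nonneg_left hv (norm_nonneg T))
  have hsum : T (x + w) + T (x - w) = (2 : ℝ) • T x := by
    rw [← map_add, add_add_sub_cancel, ← two_smul ℝ x, map_smul]
  have hmid : T (x + w) = T (x - w) :=
    StrictConvexSpace.eq_of_norm_le_of_norm_add_eq (hbound _ hadd) (hbound _ hsub)
      (by rw [hsum, norm_smul, Real.norm_two])
  rw [map_add, map_sub] at hmid
  have htwo : (2 : ℝ) • T w = 0 := calc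
    (2 : ℝ) • T w = (T x + T w) - (T x - T w) := by module
    _ = 0 := by rw [hmid, sub_self]
  exact (smul_eq_zero_iff_right two_ne_zero).mp htwo

namespace ZeroAtInftyContinuousMap

variable {α β : Type*} [TopologicalSpace α] [NormedAddCommGroup β]

theorem finite_setOf_le_norm [DiscreteTopology α] (f : C₀(α, β)) {r : ℝ} (hr : 0 < r) :
    {a | r ≤ ‖f a‖}.Finite := by
  have hsmall := (zero_at_infty f).eventually (Metric.ball_mem_nhds (0 : β) hr)
  rw [Filter.cocompact_eq_cofinite, Filter.eventually_cofinite] at hsmall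
  simpa only [Metric.mem_ball, dist_zero_right, not_lt] using hsmall

theorem norm_add_le_of_eqOn_zero {f g : C₀(α, β)} {s : Set α}
    (hs : ∀ a ∉ s, ‖f a‖ ≤ ‖f‖ / 2) (hg : Set.EqOn g 0 s) (hg' : ‖g‖ ≤ ‖f‖ / 2) :
    ‖f + g‖ ≤ ‖f‖ := by
  rw [← norm_toBCF_eq_norm, BoundedContinuousFunction.norm_le (norm_nonneg _)]
  intro a
  have hfa : ‖f a‖ ≤ ‖f‖ := f.toBCF.norm_coe_le_norm a
  have hga : ‖g a‖ ≤ ‖g‖ := g.toBCF.norm_coe_le_norm a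
  simp only [toBCF_apply, coe_add, Pi.add_apply]
  by_cases ha : a ∈ s
  · rw [hg ha, Pi.zero_apply, add_zero]
    exact hfa
  · linarith [norm_add_le (f a) (g a), hs a ha]

end ZeroAtInftyContinuousMap

theorem stmt_2_general (X : Type*) [NormedAddCommGroup X] [NormedSpace ℝ X]
    (J : X →ₗᵢ[ℝ] C₀(ℕ, ℝ))
    (Y : Type*) [NormedAddCommGroup Y] [NormedSpace ℝ Y]
    [StrictConvexSpace ℝ Y]
    (T : X →L[ℝ] Y) (hT : NormAttaining T) :
    FiniteDimensional ℝ (LinearMap.range (T : X →ₗ[ℝ] Y)) := by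
  obtain ⟨x, hx, hTx⟩ := hT
  have hx₂ : 0 < ‖x‖ / 2 := by rw [hx]; norm_num
  set F := ((J x).finite_setOf_le_norm (J.norm_map x ▸ hx₂)).toFinset
  have hF : ∀ n ∉ F, ‖J x n‖ ≤ ‖J x‖ / 2 := fun n hn =>
    (not_le.mp (by simpa only [F, Set.Finite.mem_toFinset, Set.mem_ofPred_eq] using hn)).le
  have hball : ∀ w, ‖w‖ ≤ ‖x‖ / 2 → Set.EqOn (J w) 0 F → ‖x + w‖ ≤ ‖x‖ := fun w hw hwF => by
    rw [← J.norm_map, ← J.norm_map, map_add]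
    exact ZeroAtInftyContinuousMap.norm_add_le_of_eqOn_zero hF hwF
      (by rwa [J.norm_map, J.norm_map])
  let φ : X →ₗ[ℝ] (F → ℝ) :=
    { toFun z n := J z n
      map_add' _ _ := funext fun _ => by simp
      map_smul' _ _ := funext fun _ => by simp }
  refine φ.finiteDimensional_range_of_ker_le _ fun z hz => ?_
  obtain ⟨t, ht, htz⟩ := exists_pos_mul_lt hx₂ ‖z‖
  have hnorm : ‖t • z‖ ≤ ‖x‖ / 2 := by
    rw [norm_smul, Real.norm_of_nonneg ht.le, mul_comm]
    exact htz.le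
  have hvanish : ∀ s : ℝ, Set.EqOn (J (s • z)) 0 F := fun s n hn => by
    simp [show J z n = 0 from congrFun hz ⟨n, hn⟩]
  have hTtz : T (t • z) = 0 :=
    T.apply_eq_zero_of_norm_add_le_of_norm_sub_le (by rw [hx, mul_one, hTx])
      (hball _ hnorm (hvanish t))
      (by simpa [sub_eq_add_neg] using
        hball ((-t) • z) (by rwa [neg_smul, norm_neg]) (hvanish (-t)))
  rwa [map_smul, smul_eq_zero_iff_right ht.ne'] at hTtz

/-- Let `X` be a closed subspace of `c₀` (real sequences converging to zero with the sup norm,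
realized as `C₀(ℕ, ℝ)`), encoded by a linear isometric embedding `J : X → c₀` with closed range,
and let `Y` be a strictly convex real Banach space.  Then every norm attaining bounded linear
operator `T : X → Y` has finite rank. -/
theorem stmt_2 (X : Type*) [NormedAddCommGroup X] [NormedSpace ℝ X] [CompleteSpace X]
    (J : X →ₗᵢ[ℝ] C₀(ℕ, ℝ)) (hJ : IsClosed (Set.range J))
    (Y : Type*) [NormedAddCommGroup Y] [NormedSpace ℝ Y] [CompleteSpace Y]
    [StrictConvexSpace ℝ Y]
    (T : X →L[ℝ] Y) (hT : NormAttaining T) :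
    FiniteDimensional ℝ (LinearMap.range (T : X →ₗ[ℝ] Y)) :=
  stmt_2_general X J Y T hT
end

section
/- Let X be an infinite-dimensional real Banach space whose norm locally depends upon finitely many coordinates. Then X fails Lindenstrauss property A; that is, there exist a real Banach space Y and a bounded linear operator T : X → Y such that T does not belong to the closure (in operator norm) of the set of norm attaining bounded linear operators from X to Y. -/
/-- The norm of `X` locally depends upon finitely many coordinates: for every `x ≠ 0` there are
`ε > 0`, finitely many continuous linear functionals `f₁, …, fₙ` and a continuous function
`φ : ℝⁿ → ℝ` such that `‖y‖ = φ (f₁ y, …, fₙ y)` whenever `‖x - y‖ < ε`. -/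
def NormLocallyDependsOnFinitelyManyCoordinates (X : Type*) [NormedAddCommGroup X]
    [NormedSpace ℝ X] : Prop :=
  ∀ x : X, x ≠ 0 → ∃ (ε : ℝ), 0 < ε ∧ ∃ (n : ℕ) (f : Fin n → X →L[ℝ] ℝ)
    (φ : (Fin n → ℝ) → ℝ), Continuous φ ∧
      ∀ y : X, ‖x - y‖ < ε → ‖y‖ = φ (fun i => f i y)

/-!
If `S` attains its norm at `x`, the norm of `X` is constant near `x` along a finite-codimensional
subspace `K = ⋂ ker gᵢ`. Averaging `S (x + u)` and `S (x - u)` for small `u ∈ K` shows that `S`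
vanishes on `K` when its codomain is strictly convex. Hence if `‖T z‖ ≥ 1` for a unit vector `z`
of every such `K`, then `‖T - S‖ ≥ 1` for every norm attaining `S`.

To build `T`, let `fₖ` be norming functionals at a dense sequence of an infinite-dimensional
separable subspace `Z`: then `A x = (fₖ x)ₖ ∈ ℓ^∞` is isometric on `Z`, and `Z` meets every `K`
nontrivially. The codomain is made strictly convex by passing to the graph of the injective map
`W : ℓ^∞ → ℓ²`, `a ↦ (2⁻ᵏ aₖ)`, normed by `‖a‖ + ‖W a‖`.
-/

open scoped lp ENNReal

section NormAttaining

variable {X Y : Type*} [NormedAddCommGroup X] [NormedSpace ℝ X] [NormedAddCommGroup Y]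
  [NormedSpace ℝ Y]

theorem NormLocallyDependsOnFinitelyManyCoordinates.exists_norm_add_eq
    (hX : NormLocallyDependsOnFinitelyManyCoordinates X) {x : X} (hx : x ≠ 0) :
    ∃ ε > 0, ∃ (n : ℕ) (g : Fin n → X →L[ℝ] ℝ),
      ∀ w : X, (∀ i, g i w = 0) → ‖w‖ < ε → ‖x + w‖ = ‖x‖ := by
  obtain ⟨ε, hε, n, g, φ, -, hφ⟩ := hX x hx
  refine ⟨ε, hε, n, g, fun w hw hwε => ?_⟩
  have hgw : (fun i => g i (x + w)) = fun i => g i x := funext fun i => by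
    rw [map_add, hw i, add_zero]
  rw [hφ (x + w) (by rwa [sub_add_cancel_left, norm_neg]), hgw,
    ← hφ x (by rwa [sub_self, norm_zero])]

theorem ContinuousLinearMap.apply_eq_zero_of_norm_apply_eq_opNorm [StrictConvexSpace ℝ Y]
    {S : X →L[ℝ] Y} {x u : X} (hSx : ‖S x‖ = ‖S‖) (hp : ‖x + u‖ ≤ 1) (hm : ‖x - u‖ ≤ 1) :
    S u = 0 := by
  have hmid : (1 / 2 : ℝ) • S (x + u) + (1 / 2 : ℝ) • S (x - u) = S x := by
    rw [← map_smul, ← map_smul, ← map_add]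
    congr 1
    module
  have heq : S (x + u) = S (x - u) := by
    by_contra hne
    have := norm_combo_lt_of_ne (a := 1 / 2) (b := 1 / 2) (S.unit_le_opNorm _ hp)
      (S.unit_le_opNorm _ hm) hne (by norm_num) (by norm_num) (by norm_num)
    rw [hmid, hSx] at this
    exact this.false
  have h2 : (2 : ℝ) • S u = 0 := by
    rw [← map_smul, two_smul, ← sub_eq_zero.2 heq, ← map_sub]
    congr 1
    abel
  exact (smul_eq_zero.1 h2).resolve_left two_ne_zero

def ContinuousLinearMap.NormGeOnFiniteCodim (T : X →L[ℝ] Y) (δ : ℝ) : Prop :=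
  ∀ (n : ℕ) (g : Fin n → X →L[ℝ] ℝ), ∃ z : X, ‖z‖ = 1 ∧ (∀ i, g i z = 0) ∧ δ ≤ ‖T z‖

theorem ContinuousLinearMap.NormGeOnFiniteCodim.of_norm_apply_le {Z : Type*}
    [NormedAddCommGroup Z] [NormedSpace ℝ Z] {T : X →L[ℝ] Y} {T' : X →L[ℝ] Z} {δ : ℝ}
    (hT : T.NormGeOnFiniteCodim δ) (h : ∀ x, ‖T x‖ ≤ ‖T' x‖) : T'.NormGeOnFiniteCodim δ :=
  fun n g => (hT n g).imp fun _ ⟨hz, hgz, hTz⟩ => ⟨hz, hgz, hTz.trans (h _)⟩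

theorem NormAttaining.le_norm_sub [StrictConvexSpace ℝ Y]
    (hX : NormLocallyDependsOnFinitelyManyCoordinates X) {S T : X →L[ℝ] Y} (hS : NormAttaining S)
    {δ : ℝ} (hT : T.NormGeOnFiniteCodim δ) : δ ≤ ‖T - S‖ := by
  obtain ⟨x, hx, hSx⟩ := hS
  obtain ⟨ε, hε, n, g, hflat⟩ := hX.exists_norm_add_eq (norm_ne_zero_iff.1 (hx ▸ one_ne_zero))
  obtain ⟨z, hz, hgz, hTz⟩ := hT n g
  set u := (ε / 2) • z
  have hu : ‖u‖ < ε := by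
    rw [norm_smul, hz, mul_one, Real.norm_of_nonneg (by positivity)]
    linarith
  have hgu : ∀ i, g i u = 0 := fun i => by rw [map_smul, hgz i, smul_zero]
  have hSu : S u = 0 := by
    refine S.apply_eq_zero_of_norm_apply_eq_opNorm hSx ((hflat u hgu hu).trans hx).le ?_
    rw [sub_eq_add_neg, hflat (-u) (by simp [hgu]) (by rwa [norm_neg]), hx]
  have hSz : S z = 0 := (smul_eq_zero.1 (map_smul S _ z ▸ hSu)).resolve_left (by positivity)
  calc δ ≤ ‖T z‖ := hTz
    _ = ‖(T - S) z‖ := by rw [sub_apply, hSz, sub_zero]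
    _ ≤ ‖T - S‖ := (T - S).unit_le_opNorm z hz.le

theorem notMem_closure_setOf_normAttaining [StrictConvexSpace ℝ Y]
    (hX : NormLocallyDependsOnFinitelyManyCoordinates X) {T : X →L[ℝ] Y} {δ : ℝ} (hδ : 0 < δ)
    (hT : T.NormGeOnFiniteCodim δ) : T ∉ closure {S : X →L[ℝ] Y | NormAttaining S} := by
  intro hTS
  obtain ⟨S, hS, hTS⟩ := Metric.mem_closure_iff.1 hTS δ hδ
  exact absurd (hS.le_norm_sub hX hT) (not_le.2 (dist_eq_norm T S ▸ hTS))

end NormAttaining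

namespace ContinuousLinearMap

variable {E F : Type*} [NormedAddCommGroup E] [NormedSpace ℝ E] [NormedAddCommGroup F]
  [NormedSpace ℝ F] (W : E →L[ℝ] F)

def l1Graph : Submodule ℝ (WithLp 1 (E × F)) :=
  (W ∘L WithLp.fstL 1 ℝ E F).toLinearMap.eqLocus (WithLp.sndL 1 ℝ E F).toLinearMap

theorem mem_l1Graph {z : WithLp 1 (E × F)} : z ∈ W.l1Graph ↔ W z.fst = z.snd :=
  Iff.rfl

instance [CompleteSpace E] [CompleteSpace F] : CompleteSpace W.l1Graph :=
  completeSpace_eqLocus _ _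

theorem norm_l1Graph (z : W.l1Graph) :
    ‖z‖ = ‖(z : WithLp 1 (E × F)).fst‖ + ‖W (z : WithLp 1 (E × F)).fst‖ := by
  rw [Submodule.coe_norm, WithLp.prod_norm_eq_of_L1, (mem_l1Graph W).1 z.2]

theorem strictConvexSpace_l1Graph [StrictConvexSpace ℝ F] (hW : Function.Injective W) :
    StrictConvexSpace ℝ W.l1Graph := by
  set π : W.l1Graph →ₗ[ℝ] F := W ∘ₗ WithLp.fstₗ 1 ℝ E F ∘ₗ W.l1Graph.subtype
  have hπ : Function.Injective π := by
    intro a b hab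
    refine Subtype.ext <| (WithLp.ext_iff 1).2 <| Prod.ext (hW hab) ?_
    change (a : WithLp 1 (E × F)).snd = (b : WithLp 1 (E × F)).snd
    rw [← (mem_l1Graph W).1 a.2, ← (mem_l1Graph W).1 b.2]
    exact hab
  refine StrictConvexSpace.of_norm_add fun a b ha hb hab => hπ.sameRay_map_iff.1 ?_
  have hsum : ‖a + b‖ = ‖a‖ + ‖b‖ := by rw [hab, ha, hb]; norm_num
  rw [norm_l1Graph W (a + b), norm_l1Graph W a, norm_l1Graph W b] at hsum
  have h1 := norm_add_le (a : WithLp 1 (E × F)).fst (b : WithLp 1 (E × F)).fst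
  have h2 := norm_add_le (π a) (π b)
  refine sameRay_iff_norm_add.2 ?_
  change ‖(a : WithLp 1 (E × F)).fst + (b : WithLp 1 (E × F)).fst‖ + ‖π (a + b)‖ =
    ‖(a : WithLp 1 (E × F)).fst‖ + ‖π a‖ + (‖(b : WithLp 1 (E × F)).fst‖ + ‖π b‖) at hsum
  rw [map_add] at hsum
  linarith

variable {X : Type*} [NormedAddCommGroup X] [NormedSpace ℝ X]

def l1GraphLift (A : X →L[ℝ] E) : X →L[ℝ] W.l1Graph :=
  ((WithLp.prodContinuousLinearEquiv 1 ℝ E F).symm.toContinuousLinearMap ∘L A.prod (W ∘L A))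
    |>.codRestrict W.l1Graph fun _ => rfl

theorem norm_le_norm_l1GraphLift_apply (A : X →L[ℝ] E) (x : X) :
    ‖A x‖ ≤ ‖W.l1GraphLift A x‖ := by
  rw [norm_l1Graph]
  exact le_add_of_nonneg_right (norm_nonneg _)

end ContinuousLinearMap

section LpMul

variable {ι : Type*} {p : ℝ≥0∞}

theorem norm_mul_lpInfty_apply_le (x : ℝ) (a : ℓ^∞(ι, ℝ)) (k : ι) : ‖x * a k‖ ≤ ‖x‖ * ‖a‖ := by
  rw [norm_mul]
  gcongr
  exact lp.norm_apply_le_norm ENNReal.top_ne_zero a k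

theorem memℓp_mul_lpInfty (w : ℓ^p(ι, ℝ)) (a : ℓ^∞(ι, ℝ)) : Memℓp (fun k => w k * a k) p :=
  ((lp.memℓp w).norm.const_mul ‖a‖).mono fun k =>
    (norm_mul_lpInfty_apply_le (w k) a k).trans_eq (mul_comm _ _)

noncomputable def lpMulInfty [Fact (1 ≤ p)] (w : ℓ^p(ι, ℝ)) : ℓ^∞(ι, ℝ) →L[ℝ] ℓ^p(ι, ℝ) :=
  LinearMap.mkContinuous
    { toFun := fun a => ⟨fun k => w k * a k, memℓp_mul_lpInfty w a⟩
      map_add' := fun a b => lp.ext <| funext fun k => mul_add (w k) (a k) (b k)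
      map_smul' := fun c a => lp.ext <| funext fun k => mul_left_comm (w k) c (a k) }
    ‖w‖ fun a => by
      have hp : p ≠ 0 := (zero_lt_one.trans_le Fact.out).ne'
      rw [mul_comm, ← Real.norm_of_nonneg (norm_nonneg a), ← lp.norm_const_smul hp]
      refine lp.norm_mono hp fun k => ?_
      rw [lp.coeFn_smul, Pi.smul_apply, norm_smul, norm_norm, mul_comm]
      exact norm_mul_lpInfty_apply_le (w k) a k

theorem lpMulInfty_injective [Fact (1 ≤ p)] {w : ℓ^p(ι, ℝ)} (hw : ∀ k, w k ≠ 0) :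
    Function.Injective (lpMulInfty w) := by
  refine (injective_iff_map_eq_zero _).2 fun a ha => lp.ext <| funext fun k => ?_
  exact (mul_eq_zero.1 (congrFun (congrArg (⇑) ha) k)).resolve_left (hw k)

end LpMul

theorem exists_injective_lpInfty_to_l2 :
    ∃ W : ℓ^∞(ℕ, ℝ) →L[ℝ] ℓ²(ℕ, ℝ), Function.Injective W := by
  have hw : Memℓp (fun k : ℕ => ((1 : ℝ) / 2) ^ k) 1 := memℓp_gen <| by
    simpa using summable_geometric_two
  exact ⟨lpMulInfty ⟨_, hw.of_exponent_ge one_le_two⟩, lpMulInfty_injective fun k => by simp⟩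

section Coordinates

variable {X : Type*} [NormedAddCommGroup X] [NormedSpace ℝ X]

theorem exists_norm_eq_one_map_eq_zero {F : Type*} [AddCommGroup F] [Module ℝ F]
    [FiniteDimensional ℝ F] (hX : ¬ FiniteDimensional ℝ X) (G : X →ₗ[ℝ] F) :
    ∃ z : X, ‖z‖ = 1 ∧ G z = 0 := by
  obtain ⟨x, hxG, hx⟩ : ∃ x ∈ LinearMap.ker G, x ≠ 0 := by
    refine (Submodule.ne_bot_iff _).1 fun hG => hX ?_
    exact Module.Finite.of_injective G (LinearMap.ker_eq_bot.1 hG)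
  refine ⟨‖x‖⁻¹ • x, norm_smul_inv_norm hx, ?_⟩
  rw [map_smul, LinearMap.mem_ker.1 hxG, smul_zero]

theorem exists_separable_submodule_not_finiteDimensional (hX : ¬ FiniteDimensional ℝ X) :
    ∃ Z : Submodule ℝ X, ¬ FiniteDimensional ℝ Z ∧ TopologicalSpace.IsSeparable (Z : Set X) := by
  set b := Module.Basis.ofVectorSpace ℝ X
  have : Infinite (Module.Basis.ofVectorSpaceIndex ℝ X) := by
    refine not_finite_iff_infinite.1 fun _ => hX ?_
    exact Module.Finite.of_basis b
  set v : ℕ → X := b ∘ Infinite.natEmbedding _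
  refine ⟨Submodule.span ℝ (Set.range v), fun _ => ?_, (Set.countable_range v).isSeparable.span⟩
  have hv : LinearIndependent ℝ v := b.linearIndependent.comp _ (Infinite.natEmbedding _).injective
  refine Module.Finite.not_linearIndependent_of_infinite (R := ℝ)
    (fun n => (⟨v n, Submodule.subset_span ⟨n, rfl⟩⟩ : Submodule.span ℝ (Set.range v))) ?_
  exact LinearIndependent.of_comp (Submodule.span ℝ (Set.range v)).subtype hv

end Coordinates

section LpInfty

variable {X : Type*} [NormedAddCommGroup X] [NormedSpace ℝ X] {ι : Type*}

theorem memℓp_infty_apply_of_norm_le_one (f : ι → X →L[ℝ] ℝ) (hf : ∀ k, ‖f k‖ ≤ 1) (x : X) :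
    Memℓp (fun k => f k x) ∞ :=
  memℓp_infty ⟨1 * ‖x‖, Set.forall_mem_range.2 fun k => (f k).le_of_opNorm_le (hf k) x⟩

noncomputable def toLpInfty (f : ι → X →L[ℝ] ℝ) (hf : ∀ k, ‖f k‖ ≤ 1) : X →L[ℝ] ℓ^∞(ι, ℝ) :=
  LinearMap.mkContinuous
    { toFun := fun x => ⟨fun k => f k x, memℓp_infty_apply_of_norm_le_one f hf x⟩
      map_add' := fun x y => lp.ext <| funext fun k => map_add (f k) x y
      map_smul' := fun c x => lp.ext <| funext fun k => map_smul (f k) c x }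
    1 fun x => lp.norm_le_of_forall_le (by positivity) fun k => (f k).le_of_opNorm_le (hf k) x

theorem norm_toLpInfty_apply_le (f : ι → X →L[ℝ] ℝ) (hf : ∀ k, ‖f k‖ ≤ 1) (x : X) :
    ‖toLpInfty f hf x‖ ≤ ‖x‖ := by
  simpa using (toLpInfty f hf).le_of_opNorm_le (LinearMap.mkContinuous_norm_le _ zero_le_one _) x

theorem TopologicalSpace.IsSeparable.exists_lpInfty_norm_apply_eq {s : Set X}
    (hs : TopologicalSpace.IsSeparable s) :
    ∃ A : X →L[ℝ] ℓ^∞(ℕ, ℝ), ∀ z ∈ s, ‖A z‖ = ‖z‖ := by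
  obtain ⟨c, hc, hsc⟩ := hs
  obtain ⟨d, hd⟩ : ∃ d : ℕ → X, insert 0 c = Set.range d :=
    (hc.insert 0).exists_eq_range (Set.insert_nonempty _ _)
  choose f hf hfd using fun k => exists_dual_vector'' ℝ (d k)
  set A := toLpInfty f hf
  have hclosed : IsClosed {z : X | ‖A z‖ = ‖z‖} := isClosed_eq (by fun_prop) continuous_norm
  have hrange : Set.range d ⊆ {z : X | ‖A z‖ = ‖z‖} := by
    rintro _ ⟨k, rfl⟩
    refine le_antisymm (norm_toLpInfty_apply_le f hf (d k)) ?_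
    calc ‖d k‖ = f k (d k) := (hfd k).symm
      _ ≤ ‖A (d k) k‖ := Real.le_norm_self _
      _ ≤ ‖A (d k)‖ := lp.norm_apply_le_norm ENNReal.top_ne_zero _ k
  refine ⟨A, fun z hz => closure_minimal hrange hclosed ?_⟩
  exact closure_mono (hd ▸ Set.subset_insert 0 c) (hsc hz)

theorem exists_lpInfty_normGeOnFiniteCodim_one (hX : ¬ FiniteDimensional ℝ X) :
    ∃ A : X →L[ℝ] ℓ^∞(ℕ, ℝ), A.NormGeOnFiniteCodim 1 := by
  obtain ⟨Z, hZ, hZs⟩ := exists_separable_submodule_not_finiteDimensional hX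
  obtain ⟨A, hA⟩ := hZs.exists_lpInfty_norm_apply_eq
  refine ⟨A, fun n g => ?_⟩
  obtain ⟨z, hz, hgz⟩ :=
    exists_norm_eq_one_map_eq_zero hZ (LinearMap.pi (fun i => (g i : X →ₗ[ℝ] ℝ)) ∘ₗ Z.subtype)
  exact ⟨z, hz, fun i => congrFun hgz i, ((hA z z.2).trans hz).ge⟩

end LpInfty

theorem stmt_11_general (X : Type*) [NormedAddCommGroup X] [NormedSpace ℝ X]
    (hinf : ¬ FiniteDimensional ℝ X)
    (hX : NormLocallyDependsOnFinitelyManyCoordinates X) :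
    ∃ (Y : Type) (_ : NormedAddCommGroup Y) (_ : NormedSpace ℝ Y) (_ : CompleteSpace Y)
      (T : X →L[ℝ] Y),
      T ∉ closure {S : X →L[ℝ] Y | NormAttaining S} := by
  obtain ⟨A, hA⟩ := exists_lpInfty_normGeOnFiniteCodim_one hinf
  obtain ⟨W, hW⟩ := exists_injective_lpInfty_to_l2
  have := W.strictConvexSpace_l1Graph hW
  exact ⟨W.l1Graph, inferInstance, inferInstance, inferInstance, W.l1GraphLift A,
    notMem_closure_setOf_normAttaining hX one_pos
      (hA.of_norm_apply_le (W.norm_le_norm_l1GraphLift_apply A))⟩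

/-- An infinite-dimensional real Banach space whose norm locally depends upon finitely many
coordinates fails Lindenstrauss property A: there are a real Banach space `Y` and a bounded
linear operator `T : X → Y` which is not in the operator-norm closure of the norm attaining
operators from `X` to `Y`. -/
theorem stmt_11 (X : Type*) [NormedAddCommGroup X] [NormedSpace ℝ X] [CompleteSpace X]
    (hinf : ¬ FiniteDimensional ℝ X)
    (hX : NormLocallyDependsOnFinitelyManyCoordinates X) :
    ∃ (Y : Type) (_ : NormedAddCommGroup Y) (_ : NormedSpace ℝ Y) (_ : CompleteSpace Y)
      (T : X →L[ℝ] Y),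
      T ∉ closure {S : X →L[ℝ] Y | NormAttaining S} :=
  stmt_11_general X hinf hX
end

section
/- Let X be a real Banach space with property α; that is, suppose there exist an index set I, families (x_i)_{i∈I} in the unit sphere of X and (x*_i)_{i∈I} in the unit sphere of X*, and a constant 0 ≤ ρ < 1 such that: (i) x*_i(x_i) = 1 for all i ∈ I; (ii) |x*_i(x_j)| ≤ ρ whenever i ≠ j; (iii) the closed unit ball of X is the closed absolutely convex hull of { x_i : i ∈ I }. Then X has property A^k: for every real Banach space Y, every compact bounded linear operator T : X → Y and every ε > 0, there is a norm attaining compact bounded linear operator S : X → Y with ‖T − S‖ ≤ ε‖T‖. -/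
section PropertyAlpha

variable {X Y I : Type*} [NormedAddCommGroup X] [NormedSpace ℝ X]
  [NormedAddCommGroup Y] [NormedSpace ℝ Y] {x : I → X}

theorem nonempty_of_closure_convexHull_eq_closedBall
    (hball : closure (convexHull ℝ (Set.range x ∪ Set.range fun i => -x i))
      = Metric.closedBall (0 : X) 1) :
    Nonempty I := by
  by_contra hI
  have hempty : (Set.range x ∪ Set.range fun i => -x i) = ∅ := by
    simp [not_nonempty_iff.mp hI]
  have hzero : (0 : X) ∈ Metric.closedBall (0 : X) 1 := by simp
  simp [← hball, hempty] at hzero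

theorem opNorm_le_of_forall_norm_apply_le
    (hball : closure (convexHull ℝ (Set.range x ∪ Set.range fun i => -x i))
      = Metric.closedBall (0 : X) 1)
    (U : X →L[ℝ] Y) {C : ℝ} (hC : 0 ≤ C) (hU : ∀ i, ‖U (x i)‖ ≤ C) : ‖U‖ ≤ C := by
  have hsub : Metric.closedBall (0 : X) 1 ⊆ U ⁻¹' Metric.closedBall 0 C := by
    rw [← hball]
    refine closure_minimal (convexHull_min ?_ ?_)
      (Metric.isClosed_closedBall.preimage U.continuous)
    · rintro _ (⟨i, rfl⟩ | ⟨i, rfl⟩) <;> simpa using hU i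
    · exact (convex_closedBall 0 C).linear_preimage (U : X →ₗ[ℝ] Y)
  refine U.opNorm_le_of_unit_norm hC fun z hz => ?_
  simpa using hsub (by simp [hz] : z ∈ Metric.closedBall (0 : X) 1)

theorem exists_mul_opNorm_le_norm_apply
    (hball : closure (convexHull ℝ (Set.range x ∪ Set.range fun i => -x i))
      = Metric.closedBall (0 : X) 1)
    (U : X →L[ℝ] Y) {c : ℝ} (hc : c < 1) : ∃ i, c * ‖U‖ ≤ ‖U (x i)‖ := by
  by_contra! hlt
  obtain ⟨i⟩ := nonempty_of_closure_convexHull_eq_closedBall hball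
  have hpos : 0 < c * ‖U‖ := (norm_nonneg _).trans_lt (hlt i)
  have hle := opNorm_le_of_forall_norm_apply_le hball U hpos.le fun j => (hlt j).le
  have hU : 0 < ‖U‖ := (norm_nonneg U).lt_of_ne' fun h => by simp [h] at hpos
  linarith [mul_lt_mul_of_pos_right hc hU]

theorem normAttaining_of_forall_norm_apply_le
    (hball : closure (convexHull ℝ (Set.range x ∪ Set.range fun i => -x i))
      = Metric.closedBall (0 : X) 1)
    (hx : ∀ i, ‖x i‖ = 1) (U : X →L[ℝ] Y) (i : I) (hU : ∀ j, ‖U (x j)‖ ≤ ‖U (x i)‖) :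
    NormAttaining U :=
  ⟨x i, hx i, le_antisymm (U.unit_le_opNorm _ (hx i).le)
    (opNorm_le_of_forall_norm_apply_le hball U (norm_nonneg _) hU)⟩

theorem IsCompactOperator.add_smulRight {T : X →L[ℝ] Y} (hT : IsCompactOperator T)
    (f : StrongDual ℝ X) (y : Y) : IsCompactOperator (T + f.smulRight y) :=
  hT.add ((isCompactOperator_of_locallyCompactSpace_dom f).continuous_comp
    (continuous_id.smul continuous_const))

variable {x' : I → StrongDual ℝ X} {i : I}

theorem add_smulRight_apply_self (h1 : x' i (x i) = 1) (T : X →L[ℝ] Y) (ε : ℝ) :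
    (T + (x' i).smulRight (ε • T (x i))) (x i) = (1 + ε) • T (x i) := by
  simp [h1, add_smul]

theorem norm_add_smulRight_apply_le {ρ ε : ℝ} (hx : ∀ i, ‖x i‖ = 1) (h1 : x' i (x i) = 1)
    (h2 : ∀ j, i ≠ j → |x' i (x j)| ≤ ρ) (T : X →L[ℝ] Y) (hε : 0 ≤ ε)
    (hi : (1 + ε * ρ) * ‖T‖ ≤ (1 + ε) * ‖T (x i)‖) (j : I) :
    ‖(T + (x' i).smulRight (ε • T (x i))) (x j)‖
      ≤ ‖(T + (x' i).smulRight (ε • T (x i))) (x i)‖ := by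
  obtain rfl | hij := eq_or_ne i j
  · rfl
  have hTx : ∀ k, ‖T (x k)‖ ≤ ‖T‖ := fun k => T.unit_le_opNorm _ (hx k).le
  rw [add_smulRight_apply_self h1, norm_smul, Real.norm_of_nonneg (by linarith)]
  calc ‖T (x j) + x' i (x j) • ε • T (x i)‖
      ≤ ‖T (x j)‖ + |x' i (x j)| * (ε * ‖T (x i)‖) := by
        simpa [norm_smul, abs_of_nonneg hε] using norm_add_le (T (x j)) (x' i (x j) • ε • T (x i))
    _ ≤ ‖T‖ + ρ * (ε * ‖T‖) := by
        gcongr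
        exacts [hTx j, (abs_nonneg _).trans (h2 j hij), h2 j hij, hTx i]
    _ = (1 + ε * ρ) * ‖T‖ := by ring
    _ ≤ (1 + ε) * ‖T (x i)‖ := hi

end PropertyAlpha

theorem stmt_13_general (X : Type*) [NormedAddCommGroup X] [NormedSpace ℝ X]
    (I : Type*) (x : I → X) (x' : I → StrongDual ℝ X) (ρ : ℝ)
    (hρ₁ : ρ < 1)
    (hx : ∀ i, ‖x i‖ = 1) (hx' : ∀ i, ‖x' i‖ = 1)
    (h1 : ∀ i, x' i (x i) = 1)
    (h2 : ∀ i j, i ≠ j → |x' i (x j)| ≤ ρ)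
    (h3 : closure (convexHull ℝ (Set.range x ∪ Set.range fun i => -x i))
        = Metric.closedBall (0 : X) 1) :
    ∀ (Y : Type) [NormedAddCommGroup Y] [NormedSpace ℝ Y] [CompleteSpace Y],
      ∀ T : X →L[ℝ] Y, IsCompactOperator T → ∀ ε : ℝ, 0 < ε →
        ∃ S : X →L[ℝ] Y, IsCompactOperator S ∧ NormAttaining S ∧ ‖T - S‖ ≤ ε * ‖T‖ := by
  intro Y _ _ _ T hT ε hε
  obtain ⟨i, hi⟩ := exists_mul_opNorm_le_norm_apply h3 T
    (c := (1 + ε * ρ) / (1 + ε)) (by rw [div_lt_one (by linarith)]; nlinarith)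
  rw [div_mul_eq_mul_div, div_le_iff₀' (by linarith)] at hi
  refine ⟨T + (x' i).smulRight (ε • T (x i)), hT.add_smulRight _ _,
    normAttaining_of_forall_norm_apply_le h3 hx _ i
      (norm_add_smulRight_apply_le hx (h1 i) (h2 i) T hε.le hi), ?_⟩
  rw [sub_add_cancel_left, norm_neg, ContinuousLinearMap.norm_smulRight_apply, hx' i, one_mul,
    norm_smul, Real.norm_of_nonneg hε.le]
  exact mul_le_mul_of_nonneg_left (T.unit_le_opNorm _ (hx i).le) hε.le

/-- Schachermayer's property α implies property A^k: if `X` has property α (witnessed by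
families `(x i)` in `S_X`, `(x' i)` in `S_{X*}` and a constant `0 ≤ ρ < 1` such that
`x' i (x i) = 1`, `|x' i (x j)| ≤ ρ` for `i ≠ j`, and the closed unit ball of `X` is the closed
absolutely convex hull of `{x i}`), then for every real Banach space `Y`, every compact operator
`T : X → Y` and every `ε > 0` there is a norm attaining compact operator `S : X → Y` with
`‖T - S‖ ≤ ε * ‖T‖`. -/
theorem stmt_13 (X : Type*) [NormedAddCommGroup X] [NormedSpace ℝ X] [CompleteSpace X]
    (I : Type*) (x : I → X) (x' : I → StrongDual ℝ X) (ρ : ℝ)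
    (hρ₀ : 0 ≤ ρ) (hρ₁ : ρ < 1)
    (hx : ∀ i, ‖x i‖ = 1) (hx' : ∀ i, ‖x' i‖ = 1)
    (h1 : ∀ i, x' i (x i) = 1)
    (h2 : ∀ i j, i ≠ j → |x' i (x j)| ≤ ρ)
    (h3 : closure (convexHull ℝ (Set.range x ∪ Set.range fun i => -x i))
        = Metric.closedBall (0 : X) 1) :
    ∀ (Y : Type) [NormedAddCommGroup Y] [NormedSpace ℝ Y] [CompleteSpace Y],
      ∀ T : X →L[ℝ] Y, IsCompactOperator T → ∀ ε : ℝ, 0 < ε →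
        ∃ S : X →L[ℝ] Y, IsCompactOperator S ∧ NormAttaining S ∧ ‖T - S‖ ≤ ε * ‖T‖ :=
  stmt_13_general X I x x' ρ hρ₁ hx hx' h1 h2 h3
end

section
/- Let X be a real Banach space having Lindenstrauss property A and such that the dual space X* has the approximation property. Then X has property A^k: for every real Banach space Y, the set of norm attaining compact operators from X to Y is dense in operator norm in the space of all compact operators from X to Y. -/
/-!
By Schauder's theorem `y ↦ y ∘ T` maps the dual unit ball onto a compact set `K ⊆ X*`, so the
approximation property of `X*` gives a finite-rank `R = ∑ fᵢ ⊗ ψᵢ` (`fᵢ ∈ X**`, `ψᵢ ∈ X*`)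
uniformly close to the identity on `K`. Helly's lemma realises each `fᵢ` on `K`, up to a small
error, as evaluation at some `xᵢ ∈ X`; then `F = ∑ ψᵢ ⊗ T xᵢ` has finite rank and `y ∘ F` is close
to `R (y ∘ T)`, hence to `y ∘ T`, uniformly in `‖y‖ ≤ 1`, so `F` is close to `T`. Property A,
applied to `F` as an operator into its finite-dimensional range, yields norm attaining operators
of finite rank, hence compact, arbitrarily close to `F`.
-/

open Topology

universe u

def HasApproximationProperty (E : Type*) [NormedAddCommGroup E] [NormedSpace ℝ E] : Prop :=
  ∀ K : Set E, IsCompact K → ∀ ε : ℝ, 0 < ε → ∃ R : E →L[ℝ] E,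
    FiniteDimensional ℝ (LinearMap.range (R : E →ₗ[ℝ] E)) ∧ ∀ x ∈ K, ‖x - R x‖ < ε

section Helly

variable {X : Type*} [NormedAddCommGroup X] [NormedSpace ℝ X]
  (W : Submodule ℝ (StrongDual ℝ X))

def Submodule.evalPairing : X →ₗ[ℝ] W →ₗ[ℝ] ℝ :=
  (ContinuousLinearMap.coeLM ℝ ∘ₗ W.subtype).flip

theorem Submodule.mem_ker_evalPairing {x : X} :
    x ∈ LinearMap.ker W.evalPairing ↔ ∀ φ ∈ W, φ x = 0 :=
  ⟨fun hx φ hφ => LinearMap.congr_fun (LinearMap.mem_ker.1 hx) ⟨φ, hφ⟩,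
    fun hx => LinearMap.mem_ker.2 <| LinearMap.ext fun φ => hx φ φ.2⟩

theorem exists_forall_mem_apply_eq [FiniteDimensional ℝ W]
    (f : Module.Dual ℝ (StrongDual ℝ X)) : ∃ x : X, ∀ φ ∈ W, φ x = f φ := by
  have hsurj : Function.Surjective W.evalPairing :=
    (LinearMap.flip_surjective_iff₁ (K := ℝ) (V₁ := W) (V₂ := X)).2 <|
      ContinuousLinearMap.coe_injective.comp Subtype.val_injective
  obtain ⟨x, hx⟩ := hsurj (f ∘ₗ W.subtype)
  exact ⟨x, fun φ hφ => LinearMap.congr_fun hx ⟨φ, hφ⟩⟩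

theorem mem_of_forall_apply_eq_zero [FiniteDimensional ℝ W] {ξ : StrongDual ℝ X}
    (hξ : ∀ x : X, (∀ φ ∈ W, φ x = 0) → ξ x = 0) : ξ ∈ W := by
  have hann : (ξ : X →ₗ[ℝ] ℝ) ∈ (LinearMap.ker W.evalPairing).dualAnnihilator :=
    (Submodule.mem_dualAnnihilator _).2 fun x hx => hξ x (W.mem_ker_evalPairing.1 hx)
  have := Module.Free.of_divisionRing ℝ W
  rw [LinearMap.dualAnnihilator_ker_eq_range_flip (K := ℝ) (V₁ := X) (V₂ := W)] at hann
  obtain ⟨φ, hφ⟩ := hann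
  convert φ.2
  exact (ContinuousLinearMap.coe_injective hφ).symm

theorem exists_forall_mem_apply_eq_norm_le [FiniteDimensional ℝ W]
    (f : StrongDual ℝ (StrongDual ℝ X)) {δ : ℝ} (hδ : 0 < δ) :
    ∃ x : X, (∀ φ ∈ W, φ x = f φ) ∧ ‖x‖ ≤ ‖f‖ + δ := by
  obtain ⟨x₀, hx₀⟩ := exists_forall_mem_apply_eq W f
  replace hx₀ : ∀ φ ∈ W, φ x₀ = f φ := hx₀
  set N := LinearMap.ker W.evalPairing
  -- A Hahn-Banach functional norming `x₀ + N` in `X ⧸ N` lies in `W`, where `f` controls it.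
  obtain ⟨g, hg, hgx₀⟩ := exists_dual_vector'' ℝ (N.mkQ x₀)
  set ξ := g.comp N.mkQL
  have hξW : ξ ∈ W := mem_of_forall_apply_eq_zero W fun x hx => by
    simp [ξ, (Submodule.Quotient.mk_eq_zero N).2 (W.mem_ker_evalPairing.2 hx)]
  have hξ : ‖ξ‖ ≤ 1 := by
    refine ContinuousLinearMap.opNorm_le_bound _ zero_le_one fun x => ?_
    calc ‖ξ x‖ ≤ ‖g‖ * ‖N.mkQ x‖ := g.le_opNorm _
      _ ≤ 1 * ‖x‖ :=
        mul_le_mul hg (Submodule.Quotient.norm_mk_le _ x) (norm_nonneg _) zero_le_one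
  have hquot : ‖N.mkQ x₀‖ ≤ ‖f‖ :=
    calc ‖N.mkQ x₀‖ = f ξ := by rw [← hx₀ ξ hξW]; exact hgx₀.symm
      _ ≤ ‖f‖ * ‖ξ‖ := (le_abs_self _).trans (f.le_opNorm ξ)
      _ ≤ ‖f‖ := mul_le_of_le_one_right (norm_nonneg f) hξ
  obtain ⟨x, hx, hxn⟩ := Submodule.Quotient.norm_mk_lt (N.mkQ x₀) hδ
  have hsub : x - x₀ ∈ N := (Submodule.Quotient.eq N).1 hx
  refine ⟨x, fun φ hφ => ?_, by linarith⟩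
  rw [← hx₀ φ hφ, ← sub_eq_zero, ← map_sub]
  exact W.mem_ker_evalPairing.1 hsub φ hφ

theorem exists_abs_apply_sub_le_of_isCompact (f : StrongDual ℝ (StrongDual ℝ X))
    {K : Set (StrongDual ℝ X)} (hK : IsCompact K) {ε : ℝ} (hε : 0 < ε) :
    ∃ x : X, ∀ φ ∈ K, |f φ - φ x| ≤ ε := by
  set η := ε / (2 * ‖f‖ + 1)
  have hη : 0 < η := by positivity
  obtain ⟨t, -, ht, hKt⟩ := finite_cover_balls_of_compact hK hη
  have := FiniteDimensional.span_of_finite ℝ ht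
  obtain ⟨x, hx, hxn⟩ := exists_forall_mem_apply_eq_norm_le (Submodule.span ℝ t) f one_pos
  refine ⟨x, fun φ hφ => ?_⟩
  obtain ⟨ψ, hψt, hφψ⟩ := Set.mem_iUnion₂.1 (hKt hφ)
  rw [Metric.mem_ball, dist_eq_norm] at hφψ
  have hψx : ψ x = f ψ := hx ψ (Submodule.subset_span hψt)
  calc |f φ - φ x| = |f (φ - ψ) + (ψ - φ) x| := by
        rw [map_sub, sub_apply, hψx, sub_add_sub_cancel]
    _ ≤ ‖f‖ * ‖φ - ψ‖ + ‖ψ - φ‖ * ‖x‖ :=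
        (abs_add_le _ _).trans (add_le_add (f.le_opNorm _) ((ψ - φ).le_opNorm x))
    _ ≤ ‖f‖ * η + η * (‖f‖ + 1) := by
        rw [norm_sub_rev ψ]
        gcongr
    _ = ε := by simp only [η]; field_simp; ring

end Helly

section Schauder

variable {X Y : Type*} [NormedAddCommGroup X] [NormedSpace ℝ X] [NormedAddCommGroup Y]
  [NormedSpace ℝ Y] {T : X →L[ℝ] Y}

theorem IsCompactOperator.exists_finite_approx (hT : IsCompactOperator T) {δ : ℝ} (hδ : 0 < δ) :
    ∃ t : Set Y, t.Finite ∧ ∀ x : X, ‖x‖ ≤ 1 → ∃ c ∈ t, ‖T x - c‖ < δ := by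
  obtain ⟨t, -, ht, hcover⟩ :=
    finite_cover_balls_of_compact (hT.isCompact_closure_image_closedBall 1) hδ
  refine ⟨t, ht, fun x hx => ?_⟩
  have hTx : T x ∈ closure (T '' Metric.closedBall 0 1) :=
    subset_closure ⟨x, mem_closedBall_zero_iff.2 hx, rfl⟩
  obtain ⟨c, hc, hxc⟩ := Set.mem_iUnion₂.1 (hcover hTx)
  exact ⟨c, hc, by rwa [Metric.mem_ball, dist_eq_norm] at hxc⟩

theorem norm_comp_le_of_forall_exists_norm_sub_le {t : Set Y} {δ η : ℝ}
    (ht : ∀ x : X, ‖x‖ ≤ 1 → ∃ c ∈ t, ‖T x - c‖ ≤ δ) {g : StrongDual ℝ Y}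
    (hg : ∀ c ∈ t, |g c| ≤ η) : ‖g.comp T‖ ≤ ‖g‖ * δ + η := by
  have bound : ∀ x : X, ‖x‖ ≤ 1 → |g (T x)| ≤ ‖g‖ * δ + η := fun x hx => by
    obtain ⟨c, hc, hxc⟩ := ht x hx
    calc |g (T x)| = |g (T x - c) + g c| := by rw [map_sub, sub_add_cancel]
      _ ≤ ‖g‖ * ‖T x - c‖ + η := (abs_add_le _ _).trans (add_le_add (g.le_opNorm _) (hg c hc))
      _ ≤ ‖g‖ * δ + η := by gcongr
  refine ContinuousLinearMap.opNorm_le_of_unit_norm ?_ fun x hx => bound x hx.le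
  simpa using bound 0 (by simp)

theorem IsCompactOperator.continuousOn_comp_toStrongDual (hT : IsCompactOperator T) :
    ContinuousOn (fun y : WeakDual ℝ Y => (WeakDual.toStrongDual y).comp T)
      (WeakDual.toStrongDual ⁻¹' Metric.closedBall 0 1) := by
  intro y₀ hy₀
  refine Metric.tendsto_nhds.2 fun ε hε => ?_
  obtain ⟨t, ht, hTt⟩ := hT.exists_finite_approx (δ := ε / 4) (by positivity)
  have near : ∀ᶠ y in 𝓝 y₀, ∀ c ∈ t, dist (y c) (y₀ c) < ε / 4 :=
    ht.eventually_all.2 fun c _ =>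
      Metric.tendsto_nhds.1 (WeakDual.eval_continuous c).continuousAt _ (by positivity)
  filter_upwards [nhdsWithin_le_nhds near, self_mem_nhdsWithin] with y hy hyB
  rw [dist_eq_norm, ← ContinuousLinearMap.sub_comp]
  have hdiff : ‖WeakDual.toStrongDual y - WeakDual.toStrongDual y₀‖ ≤ 2 := by
    simp only [Set.mem_preimage, mem_closedBall_zero_iff] at hy₀ hyB
    linarith [norm_sub_le (WeakDual.toStrongDual y) (WeakDual.toStrongDual y₀)]
  calc _ ≤ ‖WeakDual.toStrongDual y - WeakDual.toStrongDual y₀‖ * (ε / 4) + ε / 4 :=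
        norm_comp_le_of_forall_exists_norm_sub_le
          (fun x hx => (hTt x hx).imp fun c hc => ⟨hc.1, hc.2.le⟩)
          fun c hc => (hy c hc).le
    _ ≤ 2 * (ε / 4) + ε / 4 := by gcongr
    _ < ε := by linarith

theorem IsCompactOperator.isCompact_image_comp_closedBall (hT : IsCompactOperator T) :
    IsCompact ((fun y : StrongDual ℝ Y => y.comp T) '' Metric.closedBall 0 1) := by
  have h := (WeakDual.isCompact_closedBall (0 : StrongDual ℝ Y) 1).image_of_continuousOn
    hT.continuousOn_comp_toStrongDual
  rwa [show (fun y : WeakDual ℝ Y => (WeakDual.toStrongDual y).comp T) =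
      (fun y : StrongDual ℝ Y => y.comp T) ∘ WeakDual.toStrongDual from rfl, Set.image_comp,
    Set.image_preimage_eq _ WeakDual.toStrongDual.surjective] at h

end Schauder

section FiniteRank

variable {E F : Type*} [NormedAddCommGroup E] [NormedSpace ℝ E] [NormedAddCommGroup F]
  [NormedSpace ℝ F]

theorem ContinuousLinearMap.exists_eq_sum_smulRight (R : E →L[ℝ] F)
    [FiniteDimensional ℝ (LinearMap.range (R : E →ₗ[ℝ] F))] :
    ∃ (n : ℕ) (f : Fin n → StrongDual ℝ E) (v : Fin n → F),
      R = ∑ i, (f i).smulRight (v i) := by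
  set V := LinearMap.range (R : E →ₗ[ℝ] F)
  have := Module.Free.of_divisionRing ℝ V
  set b := Module.finBasis ℝ V
  set Rres : E →L[ℝ] V := R.codRestrict V (LinearMap.mem_range_self (R : E →ₗ[ℝ] F))
  refine ⟨_, fun i => LinearMap.toContinuousLinearMap (b.coord i) ∘L Rres, fun i => b i, ?_⟩
  ext x
  calc R x = ((∑ i, b.repr (Rres x) i • b i : V) : F) := by rw [b.sum_repr]; rfl
    _ = _ := by push_cast; simp [Finset.sum_apply]

theorem ContinuousLinearMap.finiteDimensional_range_sum_smulRight {ι : Type*} [Fintype ι]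
    (f : ι → StrongDual ℝ E) (v : ι → F) :
    FiniteDimensional ℝ
      (LinearMap.range ((∑ i, (f i).smulRight (v i) : E →L[ℝ] F) : E →ₗ[ℝ] F)) := by
  have := FiniteDimensional.span_of_finite ℝ (Set.finite_range v)
  refine Submodule.finiteDimensional_of_le (S₂ := Submodule.span ℝ (Set.range v)) ?_
  rintro _ ⟨x, rfl⟩
  simpa using Submodule.sum_mem _ fun i _ =>
    Submodule.smul_mem _ (f i x) (Submodule.subset_span (Set.mem_range_self i))

theorem ContinuousLinearMap.opNorm_le_of_forall_comp {T : E →L[ℝ] F} {M : ℝ} (hM : 0 ≤ M)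
    (h : ∀ y : StrongDual ℝ F, ‖y‖ ≤ 1 → ‖y.comp T‖ ≤ M) : ‖T‖ ≤ M := by
  refine T.opNorm_le_bound hM fun x => ?_
  obtain ⟨y, hy, hyTx⟩ := exists_dual_vector'' ℝ (T x)
  calc ‖T x‖ = y (T x) := hyTx.symm
    _ ≤ ‖y.comp T x‖ := le_abs_self _
    _ ≤ M * ‖x‖ := (y.comp T).le_of_opNorm_le (h y hy) x

theorem NormAttaining.linearIsometry_comp {G : Type*} [NormedAddCommGroup G] [NormedSpace ℝ G]
    {S : E →L[ℝ] F} (hS : NormAttaining S) (e : F →ₗᵢ[ℝ] G) :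
    NormAttaining (e.toContinuousLinearMap.comp S) := by
  obtain ⟨x, hx, hSx⟩ := hS
  exact ⟨x, hx, by simp [e.norm_toContinuousLinearMap_comp, hSx]⟩

end FiniteRank

theorem mem_closure_compact_normAttaining_of_finiteDimensional_range {X : Type*}
    [NormedAddCommGroup X] [NormedSpace ℝ X] {Y : Type u} [NormedAddCommGroup Y] [NormedSpace ℝ Y]
    (hA : ∀ (Z : Type u) [NormedAddCommGroup Z] [NormedSpace ℝ Z] [FiniteDimensional ℝ Z],
      ∀ T : X →L[ℝ] Z, T ∈ closure {S : X →L[ℝ] Z | NormAttaining S})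
    (F : X →L[ℝ] Y) [FiniteDimensional ℝ (LinearMap.range (F : X →ₗ[ℝ] Y))] :
    F ∈ closure {S : X →L[ℝ] Y | IsCompactOperator S ∧ NormAttaining S} := by
  set Z := LinearMap.range (F : X →ₗ[ℝ] Y)
  set ι := Z.subtypeₗᵢ.toContinuousLinearMap
  have hF : F = ι.comp (F.codRestrict Z (LinearMap.mem_range_self (F : X →ₗ[ℝ] Y))) := rfl
  rw [hF]
  refine map_mem_closure (continuous_const.clm_comp continuous_id) (hA Z _) fun S hS => ?_
  exact ⟨(isCompactOperator_of_locallyCompactSpace_dom S).clm_comp ι,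
    hS.linearIsometry_comp Z.subtypeₗᵢ⟩

section Approximation

variable {X Y : Type*} [NormedAddCommGroup X] [NormedSpace ℝ X] [NormedAddCommGroup Y]
  [NormedSpace ℝ Y]

theorem IsCompactOperator.mem_closure_finiteDimensional_range
    (hAP : HasApproximationProperty (StrongDual ℝ X)) {T : X →L[ℝ] Y} (hT : IsCompactOperator T) :
    T ∈ closure {F : X →L[ℝ] Y | FiniteDimensional ℝ (LinearMap.range (F : X →ₗ[ℝ] Y))} := by
  refine Metric.mem_closure_iff.2 fun ε hε => ?_
  set K := (fun y : StrongDual ℝ Y => y.comp T) '' Metric.closedBall 0 1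
  have hK : IsCompact K := hT.isCompact_image_comp_closedBall
  obtain ⟨R, _, hR⟩ := hAP K hK (ε / 3) (by positivity)
  obtain ⟨n, f, ψ, rfl⟩ := R.exists_eq_sum_smulRight
  set δ := ε / 3 / (∑ i, ‖ψ i‖ + 1)
  choose x hx using fun i => exists_abs_apply_sub_le_of_isCompact (f i) hK
    (ε := δ) (by positivity)
  refine ⟨∑ i, (ψ i).smulRight (T (x i)),
    ContinuousLinearMap.finiteDimensional_range_sum_smulRight _ _, ?_⟩
  rw [dist_eq_norm]
  refine lt_of_le_of_lt (ContinuousLinearMap.opNorm_le_of_forall_comp (M := 2 * ε / 3)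
    (by positivity) fun y hy => ?_) (by linarith)
  have hyK : y.comp T ∈ K := ⟨y, mem_closedBall_zero_iff.2 hy, rfl⟩
  set φ := y.comp T
  have split : y.comp (T - ∑ i, (ψ i).smulRight (T (x i))) =
      (φ - (∑ i, (f i).smulRight (ψ i)) φ) + ∑ i, (f i φ - φ (x i)) • ψ i := by
    ext z; simp [φ, mul_comm, mul_sub, Finset.sum_sub_distrib]
  have hsum : ‖∑ i, (f i φ - φ (x i)) • ψ i‖ ≤ ε / 3 :=
    calc ‖∑ i, (f i φ - φ (x i)) • ψ i‖ ≤ ∑ i, δ * ‖ψ i‖ := by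
          refine (norm_sum_le _ _).trans (Finset.sum_le_sum fun i _ => ?_)
          rw [norm_smul]
          exact mul_le_mul_of_nonneg_right (hx i φ hyK) (norm_nonneg _)
      _ ≤ ε / 3 := by
          rw [← Finset.mul_sum, div_mul_eq_mul_div, div_le_iff₀ (by positivity)]
          nlinarith
  calc ‖y.comp (T - ∑ i, (ψ i).smulRight (T (x i)))‖
      ≤ ‖φ - (∑ i, (f i).smulRight (ψ i)) φ‖ + ‖∑ i, (f i φ - φ (x i)) • ψ i‖ := by
        rw [split]; exact norm_add_le _ _
    _ ≤ ε / 3 + ε / 3 := add_le_add (hR φ hyK).le hsum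
    _ = 2 * ε / 3 := by ring

end Approximation

theorem stmt_17_general (X : Type*) [NormedAddCommGroup X] [NormedSpace ℝ X]
    (hA : ∀ (Z : Type) [NormedAddCommGroup Z] [NormedSpace ℝ Z] [CompleteSpace Z],
      ∀ T : X →L[ℝ] Z, T ∈ closure {S : X →L[ℝ] Z | NormAttaining S})
    (hAP : HasApproximationProperty (StrongDual ℝ X)) :
    ∀ (Y : Type) [NormedAddCommGroup Y] [NormedSpace ℝ Y] [CompleteSpace Y],
      ∀ T : X →L[ℝ] Y, IsCompactOperator T →
        T ∈ closure {S : X →L[ℝ] Y | IsCompactOperator S ∧ NormAttaining S} := by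
  intro Y _ _ _ T hT
  refine closure_minimal (fun F (_ : FiniteDimensional ℝ _) => ?_) isClosed_closure
    (hT.mem_closure_finiteDimensional_range hAP)
  exact mem_closure_compact_normAttaining_of_finiteDimensional_range (fun Z _ _ _ => hA Z) F

/-- If a real Banach space `X` has Lindenstrauss property A (norm attaining operators from `X`
into any Banach space are dense in the operators) and `X*` has the approximation property, then
`X` has property A^k: for every real Banach space `Y`, the norm attaining compact operators
from `X` to `Y` are dense in the compact operators. -/
theorem stmt_17 (X : Type*) [NormedAddCommGroup X] [NormedSpace ℝ X] [CompleteSpace X]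
    (hA : ∀ (Z : Type) [NormedAddCommGroup Z] [NormedSpace ℝ Z] [CompleteSpace Z],
      ∀ T : X →L[ℝ] Z, T ∈ closure {S : X →L[ℝ] Z | NormAttaining S})
    (hAP : HasApproximationProperty (StrongDual ℝ X)) :
    ∀ (Y : Type) [NormedAddCommGroup Y] [NormedSpace ℝ Y] [CompleteSpace Y],
      ∀ T : X →L[ℝ] Y, IsCompactOperator T →
        T ∈ closure {S : X →L[ℝ] Y | IsCompactOperator S ∧ NormAttaining S} :=
  stmt_17_general X hA hAP
end

section
/- Let Y be a real Banach space with property β; that is, suppose there exist an index set I, families (y_i)_{i∈I} in the unit sphere of Y and (y*_i)_{i∈I} in the unit sphere of Y*, and a constant 0 ≤ ρ < 1 such that: (i) y*_i(y_i) = 1 for all i ∈ I; (ii) |y*_i(y_j)| ≤ ρ whenever i ≠ j; (iii) ‖y‖ = sup_{i∈I} |y*_i(y)| for every y ∈ Y. Then Y has property B^k: for every real Banach space X, every compact bounded linear operator T : X → Y with ‖T‖ = 1 and every ε > 0, there is a norm attaining compact bounded linear operator S : X → Y with ‖T − S‖ < ε. -/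
/-! Lindenstrauss' argument. Choose `i` such that `f = y' i ∘ T` nearly attains its norm. The
Bishop–Phelps theorem, proved from Ekeland's variational principle and a separation argument in
`X × ℝ`, gives a functional `g` with `‖g‖ ≤ 1`, `g x₀ = 1 = ‖x₀‖` and `g` close to `f`. Then
`S = T + ((1 + η) g - f) ⊗ y i` is a compact perturbation of `T` with `y' i ∘ S = (1 + η) g`.
For `k ≠ i` the condition `|y' k (y i)| ≤ ρ` keeps `|y' k (S z)| ≤ (1 + η) ‖z‖`, so, the `y' k`
being norming, `‖S‖ = 1 + η = ‖S x₀‖`. -/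

open Filter Set

section Ekeland

variable {X : Type*} [PseudoMetricSpace X] {φ : X → ℝ} {ε : ℝ} {a b : X}

def ekelandSet (ε : ℝ) (φ : X → ℝ) (a : X) : Set X := {b | ε * dist b a + φ b ≤ φ a}

theorem self_mem_ekelandSet : a ∈ ekelandSet ε φ a := by
  simp [ekelandSet]

theorem apply_le_of_mem_ekelandSet (hε : 0 ≤ ε) (hb : b ∈ ekelandSet ε φ a) : φ b ≤ φ a := by
  have := mul_nonneg hε (dist_nonneg (x := b) (y := a))
  simp only [ekelandSet, mem_ofPred_eq] at hb
  linarith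

theorem ekelandSet_subset (hε : 0 ≤ ε) (hb : b ∈ ekelandSet ε φ a) :
    ekelandSet ε φ b ⊆ ekelandSet ε φ a := by
  intro c hc
  have := mul_le_mul_of_nonneg_left (dist_triangle c b a) hε
  simp only [ekelandSet, mem_ofPred_eq] at *
  linarith

theorem isClosed_ekelandSet (hφ : LowerSemicontinuous φ) (a : X) :
    IsClosed (ekelandSet ε φ a) :=
  ((continuous_const.mul (continuous_id.dist continuous_const)).lowerSemicontinuous.add
    hφ).isClosed_preimage (φ a)

theorem cauchySeq_of_mem_ekelandSet (hε : 0 < ε) (hφ : BddBelow (range φ)) {s : ℕ → X}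
    (hs : ∀ n m, n ≤ m → s m ∈ ekelandSet ε φ (s n)) : CauchySeq s := by
  have hanti : Antitone (fun n => φ (s n)) := fun n m h =>
    apply_le_of_mem_ekelandSet (φ := φ) hε.le (hs n m h)
  have hbdd : BddBelow (range fun n => φ (s n)) := hφ.mono (range_comp_subset_range s φ)
  have hL := tendsto_atTop_ciInf hanti hbdd
  refine cauchySeq_of_le_tendsto_0' (fun n => (φ (s n) - ⨅ k, φ (s k)) / ε) (fun n m h => ?_) ?_
  · rw [le_div_iff₀ hε, dist_comm]
    have := hs n m h
    have := ciInf_le hbdd m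
    simp only [ekelandSet, mem_ofPred_eq] at *
    linarith
  · simpa using (hL.sub_const (⨅ k, φ (s k))).div_const ε

theorem ekeland_variational_principle [CompleteSpace X] (hφ : LowerSemicontinuous φ)
    (hφ_bdd : BddBelow (range φ)) (hε : 0 < ε) (u : X) :
    ∃ v, ε * dist v u + φ v ≤ φ u ∧ ∀ x, φ v ≤ φ x + ε * dist x v := by
  have hS_bdd (a : X) : BddBelow (φ '' ekelandSet ε φ a) := hφ_bdd.mono (image_subset_range _ _)
  have hnext (a : X) (n : ℕ) :
      ∃ b ∈ ekelandSet ε φ a, φ b < sInf (φ '' ekelandSet ε φ a) + 1 / (n + 1) := by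
    obtain ⟨_, ⟨b, hb, rfl⟩, hlt⟩ := exists_lt_of_csInf_lt (s := φ '' ekelandSet ε φ a)
      ⟨φ a, a, self_mem_ekelandSet, rfl⟩ (lt_add_of_pos_right _ Nat.one_div_pos_of_nat)
    exact ⟨b, hb, hlt⟩
  choose! next hnext_mem hnext_lt using hnext
  let s : ℕ → X := fun n => Nat.rec u (fun n a => next a n) n
  have hs_anti : Antitone fun n => ekelandSet ε φ (s n) :=
    antitone_nat_of_succ_le fun n => ekelandSet_subset hε.le (hnext_mem (s n) n)
  have hs_mem (n m : ℕ) (h : n ≤ m) : s m ∈ ekelandSet ε φ (s n) :=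
    hs_anti h self_mem_ekelandSet
  obtain ⟨v, hv⟩ := cauchySeq_tendsto_of_complete (cauchySeq_of_mem_ekelandSet hε hφ_bdd hs_mem)
  have hv_mem (n : ℕ) : v ∈ ekelandSet ε φ (s n) :=
    (isClosed_ekelandSet hφ _).mem_of_tendsto hv (eventually_atTop.2 ⟨n, hs_mem n⟩)
  refine ⟨v, hv_mem 0, fun x => ?_⟩
  by_contra! hx
  have hx_mem : x ∈ ekelandSet ε φ v := by rw [ekelandSet, mem_ofPred_eq]; linarith
  -- `x` lies in every `ekelandSet ε φ (s n)`, on which `s (n + 1)` nearly minimises `φ`.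
  have : φ v ≤ φ x := le_of_forall_pos_lt_add fun r hr => by
    obtain ⟨n, hn⟩ := exists_nat_one_div_lt hr
    calc φ v ≤ φ (s (n + 1)) := apply_le_of_mem_ekelandSet hε.le (hv_mem (n + 1))
      _ < sInf (φ '' ekelandSet ε φ (s n)) + 1 / (n + 1) := hnext_lt (s n) n
      _ ≤ φ x + 1 / (n + 1) := by
        gcongr
        exact csInf_le (hS_bdd _) ⟨x, ekelandSet_subset hε.le (hv_mem n) hx_mem, rfl⟩
      _ < φ x + r := by gcongr
  nlinarith [dist_nonneg (x := x) (y := v)]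

end Ekeland

theorem exists_dual_between_of_concaveOn_le_convexOn {E : Type*} [TopologicalSpace E]
    [AddCommGroup E] [IsTopologicalAddGroup E] [Module ℝ E] [ContinuousSMul ℝ E]
    [LocallyConvexSpace ℝ E] {p q : E → ℝ} (hp : ConvexOn ℝ univ p) (hp_cont : Continuous p)
    (hq : ConcaveOn ℝ univ q) (hqp : q ≤ p) (hp0 : p 0 = 0) (hq0 : q 0 = 0) :
    ∃ g : StrongDual ℝ E, ∀ w, q w ≤ g w ∧ g w ≤ p w := by
  have hA_open : IsOpen {z : E × ℝ | z.1 ∈ univ ∧ p z.1 < z.2} := by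
    simpa using isOpen_lt (hp_cont.comp continuous_fst) continuous_snd
  have hdisj : Disjoint {z : E × ℝ | z.1 ∈ univ ∧ p z.1 < z.2} {z | z.1 ∈ univ ∧ z.2 ≤ q z.1} :=
    disjoint_left.2 fun z hzA hzB => (hzB.2.trans (hqp z.1)).not_gt hzA.2
  obtain ⟨F, c, hFA, hFB⟩ :=
    geometric_hahn_banach_open hp.convex_strict_epigraph hA_open hq.convex_hypograph hdisj
  set ℓ : StrongDual ℝ E := F.comp (ContinuousLinearMap.inl ℝ E ℝ)
  set β := F (0, 1)
  have hF (w : E) (t : ℝ) : F (w, t) = ℓ w + t * β := by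
    have : (w, t) = ContinuousLinearMap.inl ℝ E ℝ w + t • (0, 1) := by simp
    rw [this, map_add, map_smul, smul_eq_mul]; rfl
  have hlt (w : E) (t : ℝ) (ht : p w < t) : ℓ w + t * β < c := hF w t ▸ hFA _ ⟨trivial, ht⟩
  have hq_ge (w : E) : c ≤ ℓ w + q w * β := hF w (q w) ▸ hFB _ ⟨trivial, le_rfl⟩
  have hp_le (w : E) : ℓ w + p w * β ≤ c :=
    le_of_tendsto (((continuous_const.add (continuous_id.mul continuous_const)).tendsto
      (p w)).mono_left nhdsWithin_le_nhds)
      (eventually_nhdsWithin_of_forall (s := Ioi (p w)) fun t ht => (hlt w t ht).le)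
  -- Evaluating at `w = 0` shows `c = 0` and `β < 0`, so `-ℓ / β` lies between `q` and `p`.
  have hc : c = 0 :=
    le_antisymm (by simpa [hq0] using hq_ge 0) (by simpa [hp0] using hp_le 0)
  have hβ : 0 < -β := by linarith [hc ▸ hlt 0 1 (by rw [hp0]; exact one_pos), map_zero ℓ]
  refine ⟨(-β)⁻¹ • ℓ, fun w => ?_⟩
  rw [smul_apply, smul_eq_mul, inv_mul_eq_div, le_div_iff₀ hβ, div_le_iff₀ hβ]
  constructor <;> linarith [hc ▸ hq_ge w, hc ▸ hp_le w]

section BishopPhelps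

variable {X : Type*} [NormedAddCommGroup X] [NormedSpace ℝ X]

theorem StrongDual.norm_le_of_forall_apply_le (h : StrongDual ℝ X) {C : ℝ} (hC : 0 ≤ C)
    (hh : ∀ w, h w ≤ C * ‖w‖) : ‖h‖ ≤ C :=
  h.opNorm_le_bound hC fun w => abs_le.2
    ⟨by have := hh (-w); rw [map_neg, norm_neg] at this; linarith, hh w⟩

theorem StrongDual.norm_le_one_and_apply_eq_of_apply_le {g : StrongDual ℝ X} {v : X}
    (hg : ∀ w, g w ≤ ‖v + w‖ - ‖v‖) : ‖g‖ ≤ 1 ∧ g v = ‖v‖ := by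
  have hg_le (w : X) : g w ≤ 1 * ‖w‖ := by linarith [hg w, norm_add_le v w]
  refine ⟨g.norm_le_of_forall_apply_le zero_le_one hg_le, le_antisymm (by simpa using hg_le v) ?_⟩
  simpa using hg (-v)

theorem bishop_phelps [CompleteSpace X] {f : StrongDual ℝ X} (hf : ‖f‖ ≤ 1) {ε : ℝ} (hε : 0 < ε)
    {u : X} (hu : (1 - ε) * ‖u‖ < f u) :
    ∃ (g : StrongDual ℝ X) (x₀ : X), ‖x₀‖ = 1 ∧ ‖g‖ ≤ 1 ∧ g x₀ = 1 ∧ ‖f - g‖ ≤ ε := by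
  have hf_le (x : X) : f x ≤ ‖x‖ := by
    simpa using (le_abs_self _).trans (f.le_of_opNorm_le hf x)
  obtain ⟨v, hvu, hv⟩ := ekeland_variational_principle (φ := fun x => ‖x‖ - f x)
    (continuous_norm.sub f.continuous).lowerSemicontinuous
    ⟨0, by rintro _ ⟨x, rfl⟩; linarith [hf_le x]⟩ hε u
  have hv0 : v ≠ 0 := by
    rintro rfl
    simp only [dist_zero_left, norm_zero, map_zero, sub_zero] at hvu
    linarith
  -- This is Ekeland's inequality at `v + w`.
  have hqp (w : X) : f w - ε * ‖w‖ ≤ ‖v + w‖ - ‖v‖ := by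
    have := hv (v + w)
    simp only [dist_eq_norm, add_sub_cancel_left, map_add] at this
    linarith
  obtain ⟨g, hg⟩ := exists_dual_between_of_concaveOn_le_convexOn
    (p := fun w => ‖v + w‖ - ‖v‖) (q := fun w => f w - ε * ‖w‖)
    ((convexOn_univ_norm.translate_right v).add_const _) (by fun_prop)
    ((f.toLinearMap.concaveOn convex_univ).sub (convexOn_univ_norm.smul hε.le)) hqp
    (by simp) (by simp)
  obtain ⟨hg_norm, hgv⟩ := StrongDual.norm_le_one_and_apply_eq_of_apply_le fun w => (hg w).2
  refine ⟨g, ‖v‖⁻¹ • v, norm_smul_inv_norm hv0, hg_norm, by simp [hgv, hv0], ?_⟩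
  exact (f - g).norm_le_of_forall_apply_le hε.le fun w => by
    simp only [sub_apply]; linarith [(hg w).1]

end BishopPhelps

section RankOneCorrection

variable {X Y : Type*} [NormedAddCommGroup X] [NormedSpace ℝ X] [NormedAddCommGroup Y]
  [NormedSpace ℝ Y]

def rankOneCorrection (T : X →L[ℝ] Y) (φ : StrongDual ℝ Y) (y₀ : Y) (g : StrongDual ℝ X) :
    X →L[ℝ] Y :=
  T + (g - φ.comp T).smulRight y₀

variable {T : X →L[ℝ] Y} {φ : StrongDual ℝ Y} {y₀ : Y} {g : StrongDual ℝ X}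

theorem rankOneCorrection_apply (z : X) :
    rankOneCorrection T φ y₀ g z = T z + (g z - φ (T z)) • y₀ :=
  rfl

theorem apply_rankOneCorrection (h : φ y₀ = 1) (z : X) :
    φ (rankOneCorrection T φ y₀ g z) = g z := by
  simp [rankOneCorrection_apply, h]

theorem IsCompactOperator.rankOneCorrection (hT : IsCompactOperator T) :
    IsCompactOperator (rankOneCorrection T φ y₀ g) :=
  hT.add ((isCompactOperator_of_locallyCompactSpace_rng
    ((ContinuousLinearMap.id ℝ ℝ).smulRight y₀)).comp_clm (g - φ.comp T))

theorem norm_sub_rankOneCorrection :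
    ‖T - rankOneCorrection T φ y₀ g‖ = ‖g - φ.comp T‖ * ‖y₀‖ := by
  rw [rankOneCorrection, sub_add_cancel_left, norm_neg, ContinuousLinearMap.norm_smulRight_apply]

end RankOneCorrection

section PropertyBeta

variable {X Y I : Type*} [NormedAddCommGroup X] [NormedSpace ℝ X] [NormedAddCommGroup Y]
  [NormedSpace ℝ Y] {y : I → Y} {y' : I → StrongDual ℝ Y}

theorem abs_apply_le_norm_of_isLUB (hnorm : ∀ z : Y, IsLUB {r : ℝ | ∃ i, r = |y' i z|} ‖z‖)
    (i : I) (z : Y) : |y' i z| ≤ ‖z‖ :=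
  (hnorm z).1 ⟨i, rfl⟩

theorem norm_comp_le_of_isLUB (hnorm : ∀ z : Y, IsLUB {r : ℝ | ∃ i, r = |y' i z|} ‖z‖)
    (i : I) (T : X →L[ℝ] Y) : ‖(y' i).comp T‖ ≤ ‖T‖ :=
  ((y' i).comp T).opNorm_le_bound (norm_nonneg T) fun z =>
    (abs_apply_le_norm_of_isLUB hnorm i (T z)).trans (T.le_opNorm z)

theorem exists_mul_norm_lt_apply_comp (hnorm : ∀ z : Y, IsLUB {r : ℝ | ∃ i, r = |y' i z|} ‖z‖)
    (T : X →L[ℝ] Y) {c : ℝ} (hc₀ : 0 ≤ c) (hc : c < ‖T‖) : ∃ i u, c * ‖u‖ < y' i (T u) := by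
  by_contra! h
  refine hc.not_ge (T.opNorm_le_bound hc₀ fun u => (hnorm (T u)).2 ?_)
  rintro _ ⟨i, rfl⟩
  exact ((y' i).comp T).le_of_opNorm_le (StrongDual.norm_le_of_forall_apply_le _ hc₀ (h i)) u

theorem normAttaining_rankOneCorrection {ρ : ℝ} (h1 : ∀ i, y' i (y i) = 1)
    (h2 : ∀ i j, i ≠ j → |y' i (y j)| ≤ ρ)
    (hnorm : ∀ z : Y, IsLUB {r : ℝ | ∃ i, r = |y' i z|} ‖z‖) {T : X →L[ℝ] Y} (hT : ‖T‖ ≤ 1)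
    {i : I} {g : StrongDual ℝ X} {x₀ : X} (hx₀ : ‖x₀‖ = 1) (hg : ‖g‖ ≤ 1) (hgx₀ : g x₀ = 1)
    {η κ : ℝ} (hη : 0 ≤ η) (hκ : ‖(1 + η) • g - (y' i).comp T‖ ≤ κ) (hρκ : ρ * κ ≤ η) :
    NormAttaining (rankOneCorrection T (y' i) (y i) ((1 + η) • g)) := by
  set S := rankOneCorrection T (y' i) (y i) ((1 + η) • g)
  have hS_i (z : X) : y' i (S z) = (1 + η) * g z := apply_rankOneCorrection (h1 i) z
  have hS_le (z : X) : ‖S z‖ ≤ (1 + η) * ‖z‖ := by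
    refine (hnorm (S z)).2 ?_
    rintro _ ⟨k, rfl⟩
    rcases eq_or_ne k i with rfl | hk
    · rw [hS_i, abs_mul, abs_of_nonneg (by linarith)]
      gcongr
      exact g.le_of_opNorm_le hg z |>.trans_eq (one_mul _)
    · have hT_le : |y' k (T z)| ≤ ‖z‖ := (abs_apply_le_norm_of_isLUB hnorm k (T z)).trans
        (T.le_of_opNorm_le hT z |>.trans_eq (one_mul _))
      have hc_le : |((1 + η) • g - (y' i).comp T) z| ≤ κ * ‖z‖ :=
        ((1 + η) • g - (y' i).comp T).le_of_opNorm_le hκ z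
      have hκ₀ : 0 ≤ κ := (norm_nonneg _).trans hκ
      rw [rankOneCorrection_apply, map_add, map_smul, smul_eq_mul]
      calc _ ≤ |y' k (T z)| + |((1 + η) • g - (y' i).comp T) z| * |y' k (y i)| := by
            rw [← abs_mul]; exact abs_add_le _ _
        _ ≤ ‖z‖ + κ * ‖z‖ * ρ :=
            add_le_add hT_le (mul_le_mul hc_le (h2 k i hk) (abs_nonneg _) (by positivity))
        _ ≤ (1 + η) * ‖z‖ := by nlinarith [norm_nonneg z]
  refine ⟨x₀, hx₀, le_antisymm (S.le_opNorm x₀ |>.trans_eq (by rw [hx₀, mul_one])) ?_⟩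
  calc ‖S‖ ≤ 1 + η := S.opNorm_le_bound (by linarith) hS_le
    _ = |y' i (S x₀)| := by rw [hS_i, hgx₀, mul_one, abs_of_nonneg (by linarith)]
    _ ≤ ‖S x₀‖ := abs_apply_le_norm_of_isLUB hnorm i (S x₀)

end PropertyBeta

theorem stmt_18_general (Y : Type*) [NormedAddCommGroup Y] [NormedSpace ℝ Y]
    (I : Type*) (y : I → Y) (y' : I → StrongDual ℝ Y) (ρ : ℝ)
    (hρ₀ : 0 ≤ ρ) (hρ₁ : ρ < 1)
    (hy : ∀ i, ‖y i‖ = 1)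
    (h1 : ∀ i, y' i (y i) = 1)
    (h2 : ∀ i j, i ≠ j → |y' i (y j)| ≤ ρ)
    (h3 : ∀ z : Y, IsLUB {r : ℝ | ∃ i, r = |y' i z|} ‖z‖) :
    ∀ (X : Type) [NormedAddCommGroup X] [NormedSpace ℝ X] [CompleteSpace X],
      ∀ T : X →L[ℝ] Y, IsCompactOperator T → ‖T‖ = 1 → ∀ ε : ℝ, 0 < ε →
        ∃ S : X →L[ℝ] Y, IsCompactOperator S ∧ NormAttaining S ∧ ‖T - S‖ < ε := by
  intro X _ _ _ T hT_cpt hT ε hε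
  obtain ⟨δ, η, hδ, hη, hδ₁, hδη, hρη⟩ :
      ∃ δ η : ℝ, 0 < δ ∧ 0 ≤ η ∧ δ ≤ 1 ∧ δ + η < ε ∧ ρ * (δ + η) ≤ η := by
    have := lt_min hε one_pos
    have := min_le_left ε 1
    have := min_le_right ε 1
    exact ⟨(1 - ρ) * min ε 1 / 2, ρ * min ε 1 / 2, by nlinarith, by positivity, by nlinarith,
      by linarith, by nlinarith⟩
  obtain ⟨i, u, hu⟩ := exists_mul_norm_lt_apply_comp h3 T (c := 1 - δ) (by linarith) (by linarith)
  obtain ⟨g, x₀, hx₀, hg, hgx₀, hfg⟩ :=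
    bishop_phelps ((norm_comp_le_of_isLUB h3 i T).trans_eq hT) hδ hu
  have hκ : ‖(1 + η) • g - (y' i).comp T‖ ≤ δ + η := calc
    _ = ‖η • g - ((y' i).comp T - g)‖ := by congr 1; module
    _ ≤ η * 1 + δ := by
      grw [norm_sub_le, norm_smul, Real.norm_of_nonneg hη, hg, hfg]
    _ = δ + η := by ring
  refine ⟨_, hT_cpt.rankOneCorrection,
    normAttaining_rankOneCorrection h1 h2 h3 hT.le hx₀ hg hgx₀ hη hκ hρη, ?_⟩
  rw [norm_sub_rankOneCorrection, hy, mul_one]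
  linarith

/-- (Lindenstrauss) Property β implies property B^k: if `Y` has property β (witnessed by
families `(y i)` in `S_Y`, `(y' i)` in `S_{Y*}` and a constant `0 ≤ ρ < 1` with
`y' i (y i) = 1`, `|y' i (y j)| ≤ ρ` for `i ≠ j`, and `‖y‖ = sup_i |y' i y|` for all `y`),
then for every real Banach space `X`, every compact operator `T : X → Y` of norm one and every
`ε > 0` there is a norm attaining compact operator `S : X → Y` with `‖T - S‖ < ε`. -/
theorem stmt_18 (Y : Type*) [NormedAddCommGroup Y] [NormedSpace ℝ Y] [CompleteSpace Y]
    (I : Type*) (y : I → Y) (y' : I → StrongDual ℝ Y) (ρ : ℝ)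
    (hρ₀ : 0 ≤ ρ) (hρ₁ : ρ < 1)
    (hy : ∀ i, ‖y i‖ = 1) (hy' : ∀ i, ‖y' i‖ = 1)
    (h1 : ∀ i, y' i (y i) = 1)
    (h2 : ∀ i j, i ≠ j → |y' i (y j)| ≤ ρ)
    (h3 : ∀ z : Y, IsLUB {r : ℝ | ∃ i, r = |y' i z|} ‖z‖) :
    ∀ (X : Type) [NormedAddCommGroup X] [NormedSpace ℝ X] [CompleteSpace X],
      ∀ T : X →L[ℝ] Y, IsCompactOperator T → ‖T‖ = 1 → ∀ ε : ℝ, 0 < ε →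
        ∃ S : X →L[ℝ] Y, IsCompactOperator S ∧ NormAttaining S ∧ ‖T - S‖ < ε :=
  stmt_18_general Y I y y' ρ hρ₀ hρ₁ hy h1 h2 h3
end
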